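/- Let S and A be measurable spaces, δ a real discount factor with 0 < δ < 1, K a Markov kernel from S × A to S, r : S × A → ℝ a bounded measurable reward, π : S → A a measurable stationary policy with value V_π, and s ∈ S, a ∈ A. Then the expected discounted reward of the one-shot-deviation policy that plays action a in period 0 at state s and follows π from period 1 onward equals (1 − δ)·r(s, a) + δ·∫ V_π(s′) ∂K(s, a); that is, the payoff-to-go of a one-shot deviation decomposes into the current weighted utility plus the discounted expected continuation value under the stationary policy's value function. -/

import Mathlib

open MeasureTheory ProbabilityTheory

/-- Prepending an initial state to a trajectory. -/
def prepend {S : Type*} (s : S) (ω : ℕ → S) : ℕ → S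
  | 0 => s
  | n + 1 => ω n

/-!
Write `g ω = ∑ δᵗ (1 - δ) r (ω t, π (ω t))` for the payoff of a trajectory under `π` and
`W x = ∫ g ∂(Pπ x)`. Splitting off period `0` gives `g (prepend x ω) = (1 - δ) r (x, π x) + δ g ω`,
so the recursion for `Pπ` makes `W` a bounded measurable solution of the Bellman equation of `π`.
That equation is a `δ`-contraction on bounded functions, hence `W = Vπ`. The deviation payoff
splits off period `0` in the same way, with `r (s, a)` in place of `r (s, π s)`.
-/

noncomputable def discountedSum (δ : ℝ) (u : ℕ → ℝ) : ℝ :=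
  ∑' t, δ ^ t * (1 - δ) * u t

section DiscountedSum

variable {δ C : ℝ} {u : ℕ → ℝ}

lemma norm_discounted_term_le (hδ0 : 0 ≤ δ) (hδ1 : δ < 1) (hu : ∀ t, |u t| ≤ C) (t : ℕ) :
    ‖δ ^ t * (1 - δ) * u t‖ ≤ δ ^ t * (1 - δ) * C := by
  have hw : 0 ≤ δ ^ t * (1 - δ) := mul_nonneg (pow_nonneg hδ0 t) (sub_nonneg.mpr hδ1.le)
  rw [Real.norm_eq_abs, abs_mul, abs_of_nonneg hw]
  exact mul_le_mul_of_nonneg_left (hu t) hw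

lemma hasSum_discounted_const (hδ0 : 0 ≤ δ) (hδ1 : δ < 1) :
    HasSum (fun t : ℕ => δ ^ t * (1 - δ) * C) C := by
  have h := (hasSum_geometric_of_lt_one hδ0 hδ1).mul_right ((1 - δ) * C)
  rw [inv_mul_cancel_left₀ (by linarith : (1 - δ) ≠ 0)] at h
  exact h.congr_fun fun t => by ring

lemma summable_discounted (hδ0 : 0 ≤ δ) (hδ1 : δ < 1) (hu : ∀ t, |u t| ≤ C) :
    Summable fun t => δ ^ t * (1 - δ) * u t :=
  .of_norm_bounded (hasSum_discounted_const hδ0 hδ1).summable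
    (norm_discounted_term_le hδ0 hδ1 hu)

lemma abs_discountedSum_le (hδ0 : 0 ≤ δ) (hδ1 : δ < 1) (hu : ∀ t, |u t| ≤ C) :
    |discountedSum δ u| ≤ C :=
  tsum_of_norm_bounded (hasSum_discounted_const hδ0 hδ1) (norm_discounted_term_le hδ0 hδ1 hu)

lemma discountedSum_eq_add_tail (hδ0 : 0 ≤ δ) (hδ1 : δ < 1) (hu : ∀ t, |u t| ≤ C) :
    discountedSum δ u = (1 - δ) * u 0 + δ * discountedSum δ (fun t => u (t + 1)) := by
  rw [discountedSum, (summable_discounted hδ0 hδ1 hu).tsum_eq_zero_add, discountedSum,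
    ← tsum_mul_left]
  congr 1
  · ring
  · exact tsum_congr fun t => by ring

lemma measurable_discountedSum {X : Type*} [MeasurableSpace X] {v : X → ℕ → ℝ}
    (hv : ∀ t, Measurable fun x => v x t) : Measurable fun x => discountedSum δ (v x) :=
  Measurable.tsum fun t => (hv t).const_mul _

lemma discountedSum_prepend {S : Type*} (hδ0 : 0 ≤ δ) (hδ1 : δ < 1) {φ : ℕ → S → ℝ}
    (hφ : ∀ t x, |φ t x| ≤ C) (s : S) (ω : ℕ → S) :
    discountedSum δ (fun t => φ t (prepend s ω t))
      = (1 - δ) * φ 0 s + δ * discountedSum δ (fun t => φ (t + 1) (ω t)) :=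
  discountedSum_eq_add_tail hδ0 hδ1 fun t => hφ t _

end DiscountedSum

section Integral

variable {α β : Type*} [MeasurableSpace α] [MeasurableSpace β]

lemma integrable_of_abs_le {μ : Measure α} [IsFiniteMeasure μ] {f : α → ℝ} {C : ℝ}
    (hf : Measurable f) (hC : ∀ x, |f x| ≤ C) : Integrable f μ :=
  .of_bound hf.aestronglyMeasurable C (ae_of_all _ hC)

lemma abs_integral_le_of_abs_le {μ : Measure α} [IsProbabilityMeasure μ] {f : α → ℝ} {C : ℝ}
    (hC : ∀ x, |f x| ≤ C) : |∫ x, f x ∂μ| ≤ C := by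
  simpa using norm_integral_le_of_norm_le_const (μ := μ) (f := f) (ae_of_all _ hC)

lemma integral_const_add_mul {μ : Measure α} [IsProbabilityMeasure μ] {f : α → ℝ}
    (hf : Integrable f μ) (c δ : ℝ) : ∫ x, (c + δ * f x) ∂μ = c + δ * ∫ x, f x ∂μ := by
  rw [integral_add (integrable_const c) (hf.const_mul δ), integral_const, integral_const_mul,
    probReal_univ, one_smul]

lemma measurable_integral_of_measurable_measure {P : α → Measure β} (hP : Measurable P)
    {g : β → ℝ} (hg : Measurable g) : Measurable fun x => ∫ y, g y ∂(P x) :=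
  (hg.stronglyMeasurable.integral_kernel (κ := ⟨P, hP⟩)).measurable

lemma MeasureTheory.Measure.integral_bind {E : Type*} [NormedAddCommGroup E] [NormedSpace ℝ E] {μ : Measure α}
    {κ : α → Measure β} (hκ : Measurable κ) {f : β → E} (hf : Integrable f (μ.bind κ)) :
    ∫ y, f y ∂(μ.bind κ) = ∫ x, ∫ y, f y ∂(κ x) ∂μ := by
  let κ' : Kernel α β := ⟨κ, hκ⟩
  change Integrable f (κ' ∘ₘ μ) at hf
  change ∫ y, f y ∂(κ' ∘ₘ μ) = ∫ x, ∫ y, f y ∂(κ' x) ∂μ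
  rw [Measure.comp_eq_comp_const_apply] at hf ⊢
  rw [Kernel.integral_comp hf, Kernel.const_apply]

end Integral

section Trajectory

variable {S : Type*} [MeasurableSpace S]

lemma measurable_prepend (s : S) : Measurable (prepend s) :=
  measurable_pi_lambda _ fun n => by
    cases n
    exacts [measurable_const, measurable_pi_apply _]

variable {μ : Measure S} [IsProbabilityMeasure μ] {P : S → Measure (ℕ → S)}
  [∀ x, IsProbabilityMeasure (P x)] {f : (ℕ → S) → ℝ} {C : ℝ}

lemma integral_bind_map_prepend (hP : Measurable P) (s : S) (hf : Measurable f)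
    (hfC : ∀ ω, |f ω| ≤ C) :
    ∫ ω, f ω ∂(μ.bind fun x => (P x).map (prepend s))
      = ∫ x, ∫ ω, f (prepend s ω) ∂(P x) ∂μ := by
  have hκ : Measurable fun x => (P x).map (prepend s) :=
    (Measure.measurable_map _ (measurable_prepend s)).comp hP
  have : IsProbabilityMeasure (μ.bind fun x => (P x).map (prepend s)) :=
    isProbabilityMeasure_bind hκ.aemeasurable
      (ae_of_all _ fun x => Measure.isProbabilityMeasure_map (measurable_prepend s).aemeasurable)
  rw [Measure.integral_bind hκ (integrable_of_abs_le hf hfC)]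
  exact integral_congr_ae (ae_of_all _ fun x =>
    integral_map (measurable_prepend s).aemeasurable hf.aestronglyMeasurable)

lemma integral_bind_map_prepend_of_eq_add (hP : Measurable P) (s : S) (hf : Measurable f)
    (hfC : ∀ ω, |f ω| ≤ C) {g : (ℕ → S) → ℝ} {C' : ℝ} (hg : Measurable g)
    (hgC : ∀ ω, |g ω| ≤ C') {c δ : ℝ} (hfg : ∀ ω, f (prepend s ω) = c + δ * g ω) :
    ∫ ω, f ω ∂(μ.bind fun x => (P x).map (prepend s))
      = c + δ * ∫ x, ∫ ω, g ω ∂(P x) ∂μ := by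
  have hW : Integrable (fun x => ∫ ω, g ω ∂(P x)) μ :=
    integrable_of_abs_le (measurable_integral_of_measurable_measure hP hg)
      fun x => abs_integral_le_of_abs_le hgC
  rw [integral_bind_map_prepend hP s hf hfC, ← integral_const_add_mul hW]
  refine integral_congr_ae (ae_of_all _ fun x => ?_)
  simp only [hfg]
  exact integral_const_add_mul (integrable_of_abs_le hg hgC) c δ

end Trajectory

section Bellman

variable {S : Type*} [MeasurableSpace S] {ν : S → Measure S} [∀ x, IsProbabilityMeasure (ν x)]
  {δ : ℝ}

lemma eq_zero_of_eq_mul_integral (hδ : |δ| < 1) {d : S → ℝ} {C : ℝ} (hdC : ∀ x, |d x| ≤ C)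
    (hd : ∀ x, d x = δ * ∫ y, d y ∂(ν x)) : d = 0 := by
  have hpow : ∀ n : ℕ, ∀ x, |d x| ≤ |δ| ^ n * C := by
    intro n
    induction n with
    | zero => simpa using hdC
    | succ n ih =>
      intro x
      rw [hd x, abs_mul, pow_succ', mul_assoc]
      exact mul_le_mul_of_nonneg_left (abs_integral_le_of_abs_le ih) (abs_nonneg δ)
  have hlim : Filter.Tendsto (fun n : ℕ => |δ| ^ n * C) Filter.atTop (nhds 0) := by
    simpa using (tendsto_pow_atTop_nhds_zero_of_lt_one (abs_nonneg δ) hδ).mul_const C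
  funext x
  exact abs_nonpos_iff.mp (ge_of_tendsto' hlim fun n => hpow n x)

lemma eq_of_bellman (hδ : |δ| < 1) {h V W : S → ℝ} {CV CW : ℝ} (hV : Measurable V)
    (hVC : ∀ x, |V x| ≤ CV) (hW : Measurable W) (hWC : ∀ x, |W x| ≤ CW)
    (hV_eq : ∀ x, V x = h x + δ * ∫ y, V y ∂(ν x))
    (hW_eq : ∀ x, W x = h x + δ * ∫ y, W y ∂(ν x)) : V = W := by
  have hdC : ∀ x, |(V - W) x| ≤ CV + CW := fun x =>
    (abs_sub (V x) (W x)).trans (add_le_add (hVC x) (hWC x))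
  have hd : ∀ x, (V - W) x = δ * ∫ y, (V - W) y ∂(ν x) := fun x => by
    simp only [Pi.sub_apply]
    rw [hV_eq x, hW_eq x, integral_sub (integrable_of_abs_le hV hVC)
      (integrable_of_abs_le hW hWC)]
    ring
  exact sub_eq_zero.mp (eq_zero_of_eq_mul_integral hδ hdC hd)

end Bellman

/-- One-shot-deviation payoff decomposition: the expected discounted reward of the policy that
plays `a` at time `0` in state `s` and follows the stationary policy `π` from time `1` on
(whose trajectory measure is `(K (s, a)).bind (fun s₁ => (Pπ s₁).map (prepend s))`, where
`Pπ` is the Ionescu–Tulcea trajectory kernel of the chain `s ↦ K (s, π s)`) equals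
`(1 - δ) * r (s, a) + δ * ∫ Vπ ∂(K (s, a))`, where `Vπ` is the value of `π`. -/
theorem one_shot_deviation_payoff_decomposition
    {S A : Type*} [MeasurableSpace S] [MeasurableSpace A]
    (δ : ℝ) (hδ0 : 0 < δ) (hδ1 : δ < 1)
    (K : Kernel (S × A) S) [IsMarkovKernel K]
    (r : S × A → ℝ) (hr_meas : Measurable r) (hr_bd : ∃ C, ∀ p, |r p| ≤ C)
    (π : S → A) (hπ_meas : Measurable π)
    (Pπ : S → Measure (ℕ → S)) (hP_meas : Measurable Pπ)
    (hP_prob : ∀ s, IsProbabilityMeasure (Pπ s))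
    (hP_rec : ∀ s, Pπ s = (K (s, π s)).bind fun s₁ => (Pπ s₁).map (prepend s))
    (Vπ : S → ℝ) (hV_meas : Measurable Vπ) (hV_bd : ∃ C, ∀ s, |Vπ s| ≤ C)
    (hV_bellman : ∀ s, Vπ s = (1 - δ) * r (s, π s) + δ * ∫ s', Vπ s' ∂(K (s, π s)))
    (s : S) (a : A) :
    ∫ ω, (∑' t : ℕ, δ ^ t * (1 - δ) * r (ω t, if t = 0 then a else π (ω t)))
        ∂((K (s, a)).bind fun s₁ => (Pπ s₁).map (prepend s))
      = (1 - δ) * r (s, a) + δ * ∫ s', Vπ s' ∂(K (s, a)) := by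
  obtain ⟨C, hrC⟩ := hr_bd
  obtain ⟨CV, hVC⟩ := hV_bd
  have hr_traj (t : ℕ) : Measurable fun ω : ℕ → S => r (ω t, π (ω t)) :=
    hr_meas.comp ((measurable_pi_apply t).prodMk (hπ_meas.comp (measurable_pi_apply t)))
  set g : (ℕ → S) → ℝ := fun ω => discountedSum δ fun t => r (ω t, π (ω t))
  have hg : Measurable g := measurable_discountedSum hr_traj
  have hgC (ω) : |g ω| ≤ C := abs_discountedSum_le hδ0.le hδ1 fun t => hrC _
  set W : S → ℝ := fun x => ∫ ω, g ω ∂(Pπ x)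
  have hW_bellman (x : S) : W x = (1 - δ) * r (x, π x) + δ * ∫ y, W y ∂(K (x, π x)) := by
    change ∫ ω, g ω ∂(Pπ x) = _
    rw [hP_rec x]
    exact integral_bind_map_prepend_of_eq_add hP_meas x hg hgC hg hgC fun ω =>
      discountedSum_prepend hδ0.le hδ1 (φ := fun _ y => r (y, π y)) (fun _ _ => hrC _) x ω
  have hWV : W = Vπ := eq_of_bellman (abs_lt.mpr ⟨by linarith, hδ1⟩)
    (measurable_integral_of_measurable_measure hP_meas hg)
    (fun x => abs_integral_le_of_abs_le hgC) hV_meas hVC hW_bellman hV_bellman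
  have hdev : Measurable fun ω : ℕ → S =>
      discountedSum δ fun t => r (ω t, if t = 0 then a else π (ω t)) :=
    measurable_discountedSum fun t => by
      split_ifs
      exacts [hr_meas.comp ((measurable_pi_apply t).prodMk measurable_const), hr_traj t]
  rw [← hWV]
  exact integral_bind_map_prepend_of_eq_add hP_meas s hdev
    (fun ω => abs_discountedSum_le hδ0.le hδ1 fun t => hrC _) hg hgC fun ω =>
      (discountedSum_prepend hδ0.le hδ1 (φ := fun t y => r (y, if t = 0 then a else π y))
        (fun _ _ => hrC _) s ω).trans (by simp only [if_true, Nat.add_one_ne_zero, if_false]; rfl)
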